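/- Let G be a Banach Lie group with Lie algebra 𝔤 acting smoothly on the right on a Banach manifold M, and assume evolutions Evol(γ) exist for all γ ∈ L¹([0,T], 𝔤) and evol : L¹([0,T], 𝔤) → G is continuous. Let S ⊆ 𝔤 be nonempty, x₀ ∈ M, T > 0, and U ⊆ M open. If there exists γ ∈ L¹([0,T], 𝔤) with image in S such that x₀.evol(γ) ∈ U, then there exists a staircase function η : [0,T] → 𝔤 with image in S such that x₀.evol(η) ∈ U. -/

import Mathlib

open MeasureTheory
open scoped Manifold

section

/-- A staircase function on `[a,b]`: constant on the open subintervals of some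
finite partition `a = t₀ < t₁ < ⋯ < tₙ = b`. -/
def IsStaircaseOn {E : Type*} (a b : ℝ) (η : ℝ → E) : Prop :=
  ∃ (n : ℕ) (t : Fin (n + 1) → ℝ), StrictMono t ∧ t 0 = a ∧ t (Fin.last n) = b ∧
    ∀ i : Fin n, ∃ c : E, ∀ x ∈ Set.Ioo (t i.castSucc) (t i.succ), η x = c

/-- `g : [c,d] → X` is absolutely continuous: it is the indefinite Bochner
integral of an integrable function. -/
def BanachACOn {X : Type*} [NormedAddCommGroup X] [NormedSpace ℝ X]
    (g : ℝ → X) (c d : ℝ) : Prop :=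
  ∃ γ : ℝ → X, IntegrableOn γ (Set.Icc c d) ∧
    ∀ t ∈ Set.Icc c d, g t = g c + ∫ s in c..t, γ s

/-- A curve `ζ : [a,b] → N` into a Banach manifold is absolutely continuous:
it is continuous and, locally in charts, absolutely continuous. -/
def MfdACOn {X : Type*} [NormedAddCommGroup X] [NormedSpace ℝ X]
    {N : Type*} [TopologicalSpace N] [ChartedSpace X N]
    (ζ : ℝ → N) (a b : ℝ) : Prop :=
  ContinuousOn ζ (Set.Icc a b) ∧
  ∀ t₀ ∈ Set.Icc a b, ∃ c d : ℝ, c < d ∧ t₀ ∈ Set.Icc c d ∧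
    Set.Icc c d ⊆ Set.Icc a b ∧ Set.Icc c d ∈ nhdsWithin t₀ (Set.Icc a b) ∧
    (∀ t ∈ Set.Icc c d, ζ t ∈ (extChartAt 𝓘(ℝ, X) (ζ t₀)).source) ∧
    BanachACOn (fun t => extChartAt 𝓘(ℝ, X) (ζ t₀) (ζ t)) c d

variable {E : Type*} [NormedAddCommGroup E] [NormedSpace ℝ E] [CompleteSpace E]
  {G : Type*} [TopologicalSpace G] [ChartedSpace E G] [Group G]
  [LieGroup 𝓘(ℝ, E) (⊤ : ℕ∞) G]

/-- `η` is the (Carathéodory) evolution of the `L¹`-curve `γ` on `[a,b]`. -/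
def IsL1EvolutionOn (η : ℝ → G) (γ : ℝ → E) (a b : ℝ) : Prop :=
  η a = 1 ∧ MfdACOn (X := E) η a b ∧
  ∀ᵐ t ∂volume, t ∈ Set.Icc a b →
    MDifferentiableAt 𝓘(ℝ, ℝ) 𝓘(ℝ, E) η t ∧
    (mfderiv 𝓘(ℝ, ℝ) 𝓘(ℝ, E) η t (1 : ℝ) : E) =
      (mfderiv 𝓘(ℝ, E) 𝓘(ℝ, E) (fun h : G => η t * h) 1 (γ t) : E)

variable {F : Type*} [NormedAddCommGroup F] [NormedSpace ℝ F] [CompleteSpace F]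
  {M : Type*} [TopologicalSpace M] [ChartedSpace F M]

/-!
Since `g ↦ σ x₀ g` and `evol` are continuous, the controls `γ'` with `σ x₀ (evol γ') ∈ U` form
an `L¹`-neighbourhood of `γ`, so it suffices to approximate `γ` in `L¹` by staircase functions
whose values are values of `γ`. Approximate `γ` by a uniformly continuous `f` and cut `[0, T]`
into pieces on which `f` oscillates by at most `ω`. On each piece take the constant `γ x` at a
point `x` where `‖γ - f‖` is at most its mean over the piece: integrating
`‖γ s - γ x‖ ≤ ‖γ s - f s‖ + ω + ‖γ x - f x‖` over the piece bounds the `L¹`-error by twice that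
of `f` plus `ω` times the length of the piece.
-/

open Set

theorem exists_mem_setIntegral_norm_sub_le {V : Type*} [NormedAddCommGroup V]
    {α : Type*} [MeasurableSpace α] {μ : Measure α} {s : Set α} (hs : MeasurableSet s)
    (hμ₀ : μ s ≠ 0) (hμ : μ s ≠ ⊤) {γ f : α → V} {ω : ℝ}
    (hγ : IntegrableOn γ s μ) (hf : IntegrableOn f s μ)
    (hfω : ∀ t ∈ s, ∀ x ∈ s, dist (f t) (f x) ≤ ω) :
    ∃ x ∈ s, ∫ t in s, ‖γ t - γ x‖ ∂μ ≤ 2 * ∫ t in s, ‖γ t - f t‖ ∂μ + μ.real s * ω := by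
  set g : α → ℝ := fun t => ‖γ t - f t‖
  have hg : IntegrableOn g s μ := (hγ.sub hf).norm
  obtain ⟨x, hxs, hgx⟩ := exists_le_setAverage hμ₀ hμ hg
  have hconst : IntegrableOn (fun _ => ω + g x) s μ := integrableOn_const hμ
  have hpointwise : ∀ t ∈ s, ‖γ t - γ x‖ ≤ g t + (ω + g x) := fun t ht =>
    calc ‖γ t - γ x‖ = dist (γ t) (γ x) := (dist_eq_norm _ _).symm
      _ ≤ dist (γ t) (f t) + dist (f t) (f x) + dist (f x) (γ x) := dist_triangle4 _ _ _ _
      _ ≤ g t + ω + g x := by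
        gcongr
        · exact (dist_eq_norm _ _).le
        · exact hfω t ht x hxs
        · exact (dist_comm _ _).trans_le (dist_eq_norm _ _).le
      _ = g t + (ω + g x) := add_assoc _ _ _
  have hmean : μ.real s * g x ≤ ∫ t in s, g t ∂μ := by
    have hpos : 0 < μ.real s := ENNReal.toReal_pos hμ₀ hμ
    rwa [setAverage_eq, smul_eq_mul, le_inv_mul_iff₀ hpos] at hgx
  refine ⟨x, hxs, ?_⟩
  calc ∫ t in s, ‖γ t - γ x‖ ∂μ ≤ ∫ t in s, (g t + (ω + g x)) ∂μ :=
        setIntegral_mono_on ((hγ.sub (integrableOn_const hμ)).norm) (hg.add hconst) hs hpointwise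
    _ = ∫ t in s, g t ∂μ + μ.real s * ω + μ.real s * g x := by
        rw [integral_add hg hconst, setIntegral_const, smul_eq_mul]; ring
    _ ≤ 2 * ∫ t in s, g t ∂μ + μ.real s * ω := by linarith

theorem setIntegral_Icc_eq_sum_integral_Ioo {V : Type*} [NormedAddCommGroup V] [NormedSpace ℝ V]
    {f : ℝ → V} {t : ℕ → ℝ} {n : ℕ} (ht : Monotone t) (hf : IntegrableOn f (Icc (t 0) (t n))) :
    ∫ x in Icc (t 0) (t n), f x = ∑ k ∈ Finset.range n, ∫ x in Ioo (t k) (t (k + 1)), f x := by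
  have hpiece : ∀ k < n, IntervalIntegrable f volume (t k) (t (k + 1)) := fun k hk =>
    (intervalIntegrable_iff_integrableOn_Icc_of_le (ht k.le_succ)).2
      (hf.mono_set (Icc_subset_Icc (ht k.zero_le) (ht hk)))
  rw [integral_Icc_eq_integral_Ioc, ← intervalIntegral.integral_of_le (ht n.zero_le),
    ← intervalIntegral.sum_integral_adjacent_intervals hpiece]
  refine Finset.sum_congr rfl fun k _ => ?_
  rw [intervalIntegral.integral_of_le (ht k.le_succ), integral_Ioc_eq_integral_Ioo]

theorem exists_continuous_setIntegral_norm_sub_le {V : Type*} [NormedAddCommGroup V]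
    [NormedSpace ℝ V] {γ : ℝ → V} {s : Set ℝ} (hs : volume s ≠ ⊤) (hγ : IntegrableOn γ s)
    {ε : ℝ} (hε : 0 < ε) :
    ∃ f : ℝ → V, HasCompactSupport f ∧ Continuous f ∧ ∫ t in s, ‖γ t - f t‖ ≤ ε := by
  have := Measure.Regular.restrict_of_measure_ne_top (μ := volume) hs
  obtain ⟨f, hf_supp, hγf, hf_cont, -⟩ := Integrable.exists_hasCompactSupport_integral_sub_le hγ hε
  exact ⟨f, hf_supp, hf_cont, hγf⟩

noncomputable def uniformNode (a b : ℝ) (n k : ℕ) : ℝ := a + k * ((b - a) / n)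

/-- The cast to `Fin n` wraps around modulo `n`, which only matters for `x ≥ b`. -/
noncomputable def uniformPiece (a b : ℝ) (n : ℕ) [NeZero n] (x : ℝ) : Fin n :=
  Fin.ofNat n ⌊(x - a) / ((b - a) / n)⌋₊

section UniformPartition

variable {a b : ℝ} {n : ℕ}

theorem uniformNode_zero : uniformNode a b n 0 = a := by simp [uniformNode]

theorem uniformNode_self (hn : n ≠ 0) : uniformNode a b n n = b := by
  simp only [uniformNode]; field_simp; ring

theorem uniformNode_succ_sub (k : ℕ) :
    uniformNode a b n (k + 1) - uniformNode a b n k = (b - a) / n := by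
  simp only [uniformNode]; push_cast; ring

theorem uniformNode_strictMono (hab : a < b) (hn : n ≠ 0) : StrictMono (uniformNode a b n) :=
  strictMono_nat_of_lt_succ fun k => by
    have hL : 0 < (b - a) / n := div_pos (sub_pos.2 hab) (Nat.cast_pos.2 (Nat.pos_of_ne_zero hn))
    linarith [uniformNode_succ_sub (a := a) (b := b) (n := n) k]

theorem Ioo_uniformNode_subset_Icc (hab : a < b) (hn : n ≠ 0) {k : ℕ} (hk : k < n) :
    Ioo (uniformNode a b n k) (uniformNode a b n (k + 1)) ⊆ Icc a b := by
  have hmono := (uniformNode_strictMono hab hn).monotone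
  refine Ioo_subset_Icc_self.trans (Icc_subset_Icc ?_ ?_)
  · simpa only [uniformNode_zero] using hmono k.zero_le
  · simpa only [uniformNode_self hn] using hmono hk

theorem uniformPiece_eq_of_mem_Ioo (hab : a < b) [NeZero n] {k : Fin n} {x : ℝ}
    (hx : x ∈ Ioo (uniformNode a b n k) (uniformNode a b n (k + 1))) :
    uniformPiece a b n x = k := by
  set L := (b - a) / n
  have hL : 0 < L := div_pos (sub_pos.2 hab) (Nat.cast_pos.2 (NeZero.pos n))
  simp only [uniformNode] at hx
  push_cast at hx
  have hfloor : ⌊(x - a) / L⌋₊ = k := by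
    have hkL : 0 ≤ (k : ℝ) * L := by positivity
    rw [Nat.floor_eq_iff (div_nonneg (by linarith [hx.1]) hL.le), le_div_iff₀ hL, div_lt_iff₀ hL]
    constructor <;> linarith [hx.1, hx.2]
  ext
  rw [uniformPiece, Fin.val_ofNat, hfloor, Nat.mod_eq_of_lt k.isLt]

theorem measurable_uniformPiece [NeZero n] : Measurable (uniformPiece a b n) :=
  measurable_from_nat.comp <| Nat.measurable_floor.comp <| (measurable_id.sub_const a).div_const _

theorem isStaircaseOn_comp_uniformPiece {V : Type*} (hab : a < b) [NeZero n] (c : Fin n → V) :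
    IsStaircaseOn a b (c ∘ uniformPiece a b n) :=
  ⟨n, fun i => uniformNode a b n i, fun _ _ hij => uniformNode_strictMono hab (NeZero.ne n) hij,
    uniformNode_zero, uniformNode_self (NeZero.ne n),
    fun i => ⟨c i, fun _ hx => congrArg c (uniformPiece_eq_of_mem_Ioo hab hx)⟩⟩

theorem integrableOn_comp_uniformPiece {V : Type*} [NormedAddCommGroup V] [NeZero n]
    (c : Fin n → V) : IntegrableOn (c ∘ uniformPiece a b n) (Icc a b) := by
  obtain ⟨C, hC⟩ := (finite_range fun i => ‖c i‖).bddAbove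
  refine Measure.integrableOn_of_bounded measure_Icc_lt_top.ne ?_
    (ae_of_all _ fun x => hC (mem_range_self (uniformPiece a b n x)))
  exact ((StronglyMeasurable.of_discrete (f := c)).comp_measurable
    measurable_uniformPiece).aestronglyMeasurable

variable {V : Type*} [NormedAddCommGroup V]

theorem setIntegral_Icc_eq_sum_integral_Ioo_uniformNode [NormedSpace ℝ V] (hab : a < b)
    (hn : n ≠ 0) {f : ℝ → V}
    (hf : IntegrableOn f (Icc a b)) :
    ∫ x in Icc a b, f x =
      ∑ k : Fin n, ∫ x in Ioo (uniformNode a b n k) (uniformNode a b n (k + 1)), f x := by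
  rw [Fin.sum_univ_eq_sum_range
      (fun k => ∫ x in Ioo (uniformNode a b n k) (uniformNode a b n (k + 1)), f x),
    ← setIntegral_Icc_eq_sum_integral_Ioo (uniformNode_strictMono hab hn).monotone,
    uniformNode_zero, uniformNode_self hn]
  rwa [uniformNode_zero, uniformNode_self hn]

theorem exists_mem_Ioo_uniformNode_setIntegral_norm_sub_le (hab : a < b) (hn : n ≠ 0)
    {γ f : ℝ → V} {ω : ℝ} (hγ : IntegrableOn γ (Icc a b)) (hf : IntegrableOn f (Icc a b))
    (hfω : ∀ s x, dist s x < (b - a) / n → dist (f s) (f x) ≤ ω) {k : ℕ} (hk : k < n) :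
    ∃ x ∈ Ioo (uniformNode a b n k) (uniformNode a b n (k + 1)),
      ∫ s in Ioo (uniformNode a b n k) (uniformNode a b n (k + 1)), ‖γ s - γ x‖ ≤
        2 * (∫ s in Ioo (uniformNode a b n k) (uniformNode a b n (k + 1)), ‖γ s - f s‖) +
          (b - a) / n * ω := by
  have hlt := uniformNode_strictMono hab hn k.lt_succ_self
  have hsub := Ioo_uniformNode_subset_Icc hab hn hk
  rw [← uniformNode_succ_sub k, ← Real.volume_real_Ioo_of_le hlt.le]
  refine exists_mem_setIntegral_norm_sub_le measurableSet_Ioo ?_ measure_Ioo_lt_top.ne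
    (hγ.mono_set hsub) (hf.mono_set hsub) fun s hs x hx => hfω s x ?_
  · simpa [Real.volume_Ioo] using hlt
  · rw [Real.dist_eq, abs_sub_lt_iff, ← uniformNode_succ_sub k]
    constructor <;> linarith [hs.1, hs.2, hx.1, hx.2]

theorem exists_sample_setIntegral_norm_sub_comp_uniformPiece_le (hab : a < b) [NeZero n]
    {γ f : ℝ → V} {ω : ℝ} (hγ : IntegrableOn γ (Icc a b)) (hf : IntegrableOn f (Icc a b))
    (hfω : ∀ s x, dist s x < (b - a) / n → dist (f s) (f x) ≤ ω) :
    ∃ x : Fin n → ℝ, (∀ k, x k ∈ Icc a b) ∧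
      ∫ s in Icc a b, ‖γ s - ((γ ∘ x) ∘ uniformPiece a b n) s‖ ≤
        2 * (∫ s in Icc a b, ‖γ s - f s‖) + (b - a) * ω := by
  have hn := NeZero.ne n
  choose x hx_mem hx_le using fun k : Fin n =>
    exists_mem_Ioo_uniformNode_setIntegral_norm_sub_le hab hn hγ hf hfω k.isLt
  refine ⟨x, fun k => Ioo_uniformNode_subset_Icc hab hn k.isLt (hx_mem k), ?_⟩
  calc ∫ s in Icc a b, ‖γ s - ((γ ∘ x) ∘ uniformPiece a b n) s‖
      = ∑ k : Fin n, ∫ s in Ioo (uniformNode a b n k) (uniformNode a b n (k + 1)),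
          ‖γ s - γ (x k)‖ := by
        rw [setIntegral_Icc_eq_sum_integral_Ioo_uniformNode hab hn]
        · refine Finset.sum_congr rfl fun k _ => setIntegral_congr_fun measurableSet_Ioo ?_
          intro s hs
          simp only [Function.comp_apply, uniformPiece_eq_of_mem_Ioo hab hs]
        · exact (hγ.sub (integrableOn_comp_uniformPiece _)).norm
    _ ≤ ∑ k : Fin n, (2 * (∫ s in Ioo (uniformNode a b n k) (uniformNode a b n (k + 1)),
          ‖γ s - f s‖) + (b - a) / n * ω) :=
        Finset.sum_le_sum fun k _ => hx_le k
    _ = 2 * (∫ s in Icc a b, ‖γ s - f s‖) + (b - a) * ω := by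
        rw [setIntegral_Icc_eq_sum_integral_Ioo_uniformNode hab hn, Finset.sum_add_distrib,
          Finset.mul_sum, Finset.sum_const, Finset.card_univ, Fintype.card_fin, nsmul_eq_mul,
          ← mul_assoc, mul_div_cancel₀ _ (Nat.cast_ne_zero.2 hn)]
        exact (hγ.sub hf).norm

end UniformPartition

theorem exists_staircase_setIntegral_norm_sub_lt {V : Type*} [NormedAddCommGroup V]
    [NormedSpace ℝ V] {γ : ℝ → V} {a b ε : ℝ} (hab : a < b) (hε : 0 < ε)
    (hγ : IntegrableOn γ (Icc a b)) :
    ∃ η : ℝ → V, IsStaircaseOn a b η ∧ η '' Icc a b ⊆ γ '' Icc a b ∧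
      IntegrableOn η (Icc a b) ∧ ∫ t in Icc a b, ‖γ t - η t‖ < ε := by
  obtain ⟨f, hf_supp, hf_cont, hγf⟩ :=
    exists_continuous_setIntegral_norm_sub_le measure_Icc_lt_top.ne hγ (by positivity : 0 < ε / 4)
  have hω : 0 < ε / (4 * (b - a)) := div_pos hε (by linarith)
  obtain ⟨δ, hδ, hfδ⟩ := Metric.uniformContinuous_iff.1
    (hf_supp.uniformContinuous_of_continuous hf_cont) _ hω
  obtain ⟨m, hm⟩ := exists_nat_gt ((b - a) / δ)
  have hmesh : (b - a) / (m + 1 : ℕ) < δ := by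
    rw [div_lt_iff₀ (by positivity), mul_comm, ← div_lt_iff₀ hδ]
    exact hm.trans (by simp)
  obtain ⟨x, hx_mem, hx_le⟩ := exists_sample_setIntegral_norm_sub_comp_uniformPiece_le hab hγ
    hf_cont.integrableOn_Icc fun s y hsy => (hfδ (hsy.trans hmesh)).le
  refine ⟨(γ ∘ x) ∘ uniformPiece a b (m + 1), isStaircaseOn_comp_uniformPiece hab _, ?_,
    integrableOn_comp_uniformPiece _, ?_⟩
  · rintro _ ⟨s, -, rfl⟩
    exact mem_image_of_mem γ (hx_mem _)
  · have : (b - a) * (ε / (4 * (b - a))) = ε / 4 := by field_simp [(sub_pos.2 hab).ne']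
    linarith

theorem exists_staircase_control_of_L1_control_general
    (σ : M → G → M)
    (hσ : ContMDiff (𝓘(ℝ, F).prod 𝓘(ℝ, E)) 𝓘(ℝ, F) (⊤ : ℕ∞)
      (fun p : M × G => σ p.1 p.2))
    (T : ℝ) (hT : 0 < T)
    (evol : (ℝ → E) → G)
    (hcont : ∀ γ : ℝ → E, IntegrableOn γ (Set.Icc 0 T) →
      ∀ V ∈ nhds (evol γ), ∃ ε > (0 : ℝ), ∀ γ' : ℝ → E,
        IntegrableOn γ' (Set.Icc 0 T) →
        (∫ t in Set.Icc 0 T, ‖γ t - γ' t‖) < ε → evol γ' ∈ V)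
    (S : Set E) (x₀ : M) (U : Set M) (hU : IsOpen U)
    (γ : ℝ → E) (hγ : IntegrableOn γ (Set.Icc 0 T))
    (hγS : γ '' Set.Icc 0 T ⊆ S) (hreach : σ x₀ (evol γ) ∈ U) :
    ∃ η : ℝ → E, IsStaircaseOn 0 T η ∧ η '' Set.Icc 0 T ⊆ S ∧
      σ x₀ (evol η) ∈ U := by
  have hact : Continuous fun g : G => σ x₀ g := hσ.continuous.comp (Continuous.prodMk_right x₀)
  obtain ⟨ε, hε, hclose⟩ := hcont γ hγ _ ((hU.preimage hact).mem_nhds hreach)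
  obtain ⟨η, hstair, himage, hη, hlt⟩ := exists_staircase_setIntegral_norm_sub_lt hT hε hγ
  exact ⟨η, hstair, himage.trans hγS, hclose η hη hlt⟩

/-- Reachability of a neighbourhood with `L¹`-controls in `S` implies
reachability with staircase controls in `S`: here `evol` assigns to each
`L¹`-curve `γ : [0,T] → 𝔤` the endpoint of its evolution and is assumed to be
continuous for the `L¹`-topology. -/
theorem exists_staircase_control_of_L1_control
    (σ : M → G → M)
    (hσ : ContMDiff (𝓘(ℝ, F).prod 𝓘(ℝ, E)) 𝓘(ℝ, F) (⊤ : ℕ∞)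
      (fun p : M × G => σ p.1 p.2))
    (hone : ∀ x : M, σ x 1 = x)
    (hmul : ∀ (x : M) (g h : G), σ x (g * h) = σ (σ x g) h)
    (T : ℝ) (hT : 0 < T)
    (evol : (ℝ → E) → G)
    (hevol : ∀ γ : ℝ → E, IntegrableOn γ (Set.Icc 0 T) →
      ∃ η : ℝ → G, IsL1EvolutionOn η γ 0 T ∧ evol γ = η T)
    (hcont : ∀ γ : ℝ → E, IntegrableOn γ (Set.Icc 0 T) →
      ∀ V ∈ nhds (evol γ), ∃ ε > (0 : ℝ), ∀ γ' : ℝ → E,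
        IntegrableOn γ' (Set.Icc 0 T) →
        (∫ t in Set.Icc 0 T, ‖γ t - γ' t‖) < ε → evol γ' ∈ V)
    (S : Set E) (hS : S.Nonempty) (x₀ : M) (U : Set M) (hU : IsOpen U)
    (γ : ℝ → E) (hγ : IntegrableOn γ (Set.Icc 0 T))
    (hγS : γ '' Set.Icc 0 T ⊆ S) (hreach : σ x₀ (evol γ) ∈ U) :
    ∃ η : ℝ → E, IsStaircaseOn 0 T η ∧ η '' Set.Icc 0 T ⊆ S ∧
      σ x₀ (evol η) ∈ U :=
  exists_staircase_control_of_L1_control_general σ hσ T hT evol hcont S x₀ U hU γ hγ hγS hreach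

end
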